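/- arXiv:2511.16339 — 2 statements merged into one kernel-verified Lean document; each statement's English description precedes it below -/
import Mathlib

section
/- Pinsker's inequality: let p and q be probability mass functions on a finite set X such that q(x) > 0 whenever p(x) > 0. Then the total variation distance ‖p - q‖_TV = (1/2) ∑_{x∈X} |p(x) - q(x)| satisfies ‖p - q‖_TV ≤ √( (1/2) D(p‖q) ). -/
/-!
Everything rests on the elementary bound `3 (t - 1)² / (2 (t + 2)) ≤ klFun t = t log t - t + 1`
for `t ≥ 0`, the rational function agreeing with `klFun` to third order at `t = 1`. The difference
is convex, its second derivative `1/t - 27/(t + 2)³` being nonnegative by AM-GM, and it vanishes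
together with its derivative at `t = 1`. Applied to `t = p x / q x` and scaled by `q x`, it bounds
`∑ (p x - q x)² / (p x + 2 q x)` by `(2/3) D(p‖q)`; Cauchy–Schwarz with the weights `p x + 2 q x`,
which sum to `3`, turns this into `(∑ |p x - q x|)² ≤ 2 D(p‖q)`.
-/

open Finset

/-- Kullback–Leibler divergence between probability mass functions on a finite
set, with natural logarithm. Terms with `p x = 0` contribute `0`. -/
noncomputable def klDivergence {X : Type*} [Fintype X] (p q : X → ℝ) : ℝ :=
  ∑ x, p x * Real.log (p x / q x)

open Real Set InformationTheory

noncomputable def klFunQuadGap (t : ℝ) : ℝ := klFun t - 3 / 2 * (t - 1) ^ 2 / (t + 2)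

noncomputable def klFunQuadGapDeriv (t : ℝ) : ℝ :=
  log t - 3 / 2 * ((t - 1) * (t + 5)) / (t + 2) ^ 2

lemma hasDerivAt_klFunQuadGap {t : ℝ} (ht : 0 < t) :
    HasDerivAt klFunQuadGap (klFunQuadGapDeriv t) t := by
  have hquad : HasDerivAt (fun t : ℝ ↦ 3 / 2 * (t - 1) ^ 2 / (t + 2))
      (3 / 2 * ((t - 1) * (t + 5)) / (t + 2) ^ 2) t := by
    refine (((((hasDerivAt_id' t).sub_const 1).fun_pow 2).const_mul (3 / 2 : ℝ)).div
      ((hasDerivAt_id' t).add_const 2) (by linarith)).congr_deriv ?_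
    field_simp
    ring
  exact (hasDerivAt_klFun ht.ne').sub hquad

lemma hasDerivAt_klFunQuadGapDeriv {t : ℝ} (ht : 0 < t) :
    HasDerivAt klFunQuadGapDeriv (t⁻¹ - 27 / (t + 2) ^ 3) t := by
  have hrat : HasDerivAt (fun t : ℝ ↦ 3 / 2 * ((t - 1) * (t + 5)) / (t + 2) ^ 2)
      (27 / (t + 2) ^ 3) t := by
    refine (((((hasDerivAt_id' t).sub_const 1).fun_mul ((hasDerivAt_id' t).add_const 5)).const_mul
      (3 / 2 : ℝ)).div (((hasDerivAt_id' t).add_const 2).fun_pow 2) (by positivity)).congr_deriv ?_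
    field_simp
    ring
  exact (hasDerivAt_log ht.ne').sub hrat

lemma monotoneOn_klFunQuadGapDeriv : MonotoneOn klFunQuadGapDeriv (Ioi 0) := by
  refine monotoneOn_of_hasDerivWithinAt_nonneg (convex_Ioi 0)
    (fun t ht ↦ (hasDerivAt_klFunQuadGapDeriv ht).continuousAt.continuousWithinAt)
    (fun t ht ↦ (hasDerivAt_klFunQuadGapDeriv (interior_subset ht)).hasDerivWithinAt) ?_
  rw [interior_Ioi]
  intro t (ht : 0 < t)
  -- AM-GM for `t, 1, 1`
  have hamgm : 27 * t ≤ (t + 2) ^ 3 := by nlinarith [sq_nonneg (t - 1)]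
  rw [sub_nonneg, div_le_iff₀ (by positivity), inv_mul_eq_div, le_div_iff₀ ht]
  linarith

lemma convexOn_klFunQuadGap : ConvexOn ℝ (Ici 0) klFunQuadGap := by
  refine MonotoneOn.convexOn_of_deriv (convex_Ici 0) ?_ ?_ ?_
  · exact continuous_klFun.continuousOn.sub <|
      ContinuousOn.div (by fun_prop) (by fun_prop) fun t (ht : 0 ≤ t) ↦ by linarith
  · rw [interior_Ici]
    exact fun t ht ↦ (hasDerivAt_klFunQuadGap ht).differentiableAt.differentiableWithinAt
  · rw [interior_Ici]
    exact monotoneOn_klFunQuadGapDeriv.congr fun t ht ↦ (hasDerivAt_klFunQuadGap ht).deriv.symm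

lemma klFunQuadGap_nonneg {t : ℝ} (ht : 0 ≤ t) : 0 ≤ klFunQuadGap t := by
  have hmin : IsMinOn klFunQuadGap (Ici 0) 1 := by
    refine convexOn_klFunQuadGap.isMinOn_of_rightDeriv_eq_zero (by simp) ?_
    rw [(hasDerivAt_klFunQuadGap one_pos).hasDerivWithinAt.derivWithin (uniqueDiffWithinAt_Ioi 1)]
    norm_num [klFunQuadGapDeriv]
  calc 0 = klFunQuadGap 1 := by norm_num [klFunQuadGap, klFun_one]
    _ ≤ klFunQuadGap t := hmin ht

lemma sq_sub_div_le_mul_log_div_sub_add {a b : ℝ} (ha : 0 ≤ a) (hb : 0 ≤ b)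
    (hab : 0 < a → 0 < b) :
    (a - b) ^ 2 / (a + 2 * b) ≤ 2 / 3 * (a * log (a / b) - a + b) := by
  rcases hb.eq_or_lt with rfl | hb
  · obtain rfl : a = 0 := by by_contra h; exact (hab (ha.lt_of_ne' h)).false
    simp
  have hgap := klFunQuadGap_nonneg (div_nonneg ha hb.le)
  rw [klFunQuadGap, klFun_apply, sub_nonneg] at hgap
  calc (a - b) ^ 2 / (a + 2 * b) = 2 / 3 * b * (3 / 2 * (a / b - 1) ^ 2 / (a / b + 2)) := by
        field_simp
    _ ≤ 2 / 3 * b * (a / b * log (a / b) + 1 - a / b) := by gcongr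
    _ = 2 / 3 * (a * log (a / b) - a + b) := by
        field_simp
        ring

lemma klDivergence_eq_sum_sub_add {X : Type*} [Fintype X] {p q : X → ℝ}
    (hp : ∑ x, p x = 1) (hq : ∑ x, q x = 1) :
    klDivergence p q = ∑ x, (p x * log (p x / q x) - p x + q x) := by
  rw [sum_add_distrib, sum_sub_distrib, hp, hq, klDivergence, sub_add_cancel]

lemma sq_sum_abs_sub_le_sum_mul_sum_div {ι : Type*} (s : Finset ι) {p q : ι → ℝ}
    (hp : ∀ i ∈ s, 0 ≤ p i) (hq : ∀ i ∈ s, 0 ≤ q i) :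
    (∑ i ∈ s, |p i - q i|) ^ 2 ≤
      (∑ i ∈ s, (p i + 2 * q i)) * ∑ i ∈ s, (p i - q i) ^ 2 / (p i + 2 * q i) := by
  rw [mul_comm]
  refine sum_sq_le_sum_mul_sum_of_sq_le_mul s (fun i hi ↦ ?_) (fun i hi ↦ ?_) fun i hi ↦ ?_
  · have := hp i hi; have := hq i hi; positivity
  · have := hp i hi; have := hq i hi; positivity
  · rw [sq_abs, div_mul_cancel_of_imp]
    intro h
    have := hp i hi; have := hq i hi
    rw [show p i = 0 by linarith, show q i = 0 by linarith]
    simp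

/-- Pinsker's inequality: the total variation distance
`‖p - q‖_TV = (1/2) ∑_x |p(x) - q(x)|` is bounded by `√((1/2) D(p‖q))`. -/
theorem pinsker_inequality
    {X : Type*} [Fintype X] (p q : X → ℝ)
    (hp0 : ∀ x, 0 ≤ p x) (hp1 : ∑ x, p x = 1)
    (hq0 : ∀ x, 0 ≤ q x) (hq1 : ∑ x, q x = 1)
    (habs : ∀ x, 0 < p x → 0 < q x) :
    (1 / 2) * ∑ x, |p x - q x| ≤
      Real.sqrt ((1 / 2) * klDivergence p q) := by
  have hweights : ∑ x, (p x + 2 * q x) = 3 := by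
    rw [sum_add_distrib, ← mul_sum, hp1, hq1]; norm_num
  have hchi : ∑ x, (p x - q x) ^ 2 / (p x + 2 * q x) ≤ 2 / 3 * klDivergence p q := by
    rw [klDivergence_eq_sum_sub_add hp1 hq1, mul_sum]
    exact sum_le_sum fun x _ ↦ sq_sub_div_le_mul_log_div_sub_add (hp0 x) (hq0 x) (habs x)
  have hCS := sq_sum_abs_sub_le_sum_mul_sum_div univ (fun x _ ↦ hp0 x) (fun x _ ↦ hq0 x)
  rw [hweights] at hCS
  apply le_sqrt_of_sq_le
  linarith
end

section
/- Data processing inequality: let s be a joint probability mass function on a finite product set A × B × C that factorizes as a Markov chain X → Y → Z, i.e., s(a,b,c) = p(a) · k(b|a) · m(c|b) for a probability mass function p on A and stochastic kernels k(·|a) on B and m(·|b) on C. Then the pairwise mutual informations satisfy I(X;Z) ≤ I(X;Y) and I(X;Z) ≤ I(Y;Z), hence I(X;Z) ≤ min{ I(X;Y), I(Y;Z) }. -/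
open Finset

/-- Mutual information between the two coordinates of a joint pmf (in curried
form) on a finite product set: `I = ∑_{a,b} r(a,b) log( r(a,b) /
(p(a) q(b)) )` where `p`, `q` are the marginals; natural logarithm, and terms
with `r(a,b) = 0` contribute `0`. -/
noncomputable def mutualInfo {A B : Type*} [Fintype A] [Fintype B]
    (r : A → B → ℝ) : ℝ :=
  ∑ a, ∑ b, r a b * Real.log (r a b / ((∑ b', r a b') * ∑ a', r a' b))

/-- The log-sum inequality. -/
lemma logSumIneq {ι : Type*} [Fintype ι] (f g : ι → ℝ) (hf : ∀ i, 0 ≤ f i)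
    (hg : ∀ i, 0 ≤ g i) (hfg : ∀ i, g i = 0 → f i = 0) :
    (∑ i, f i) * Real.log ((∑ i, f i) / ∑ i, g i) ≤ ∑ i, f i * Real.log (f i / g i) := by
  set F := ∑ i, f i with hF
  set G := ∑ i, g i with hG
  rcases eq_or_lt_of_le (Finset.sum_nonneg fun i (_ : i ∈ univ) => hf i) with h0 | hFpos
  · have hall : ∀ i ∈ univ, f i = 0 :=
      (Finset.sum_eq_zero_iff_of_nonneg fun i _ => hf i).1 h0.symm
    have hR : ∑ i, f i * Real.log (f i / g i) = 0 :=
      Finset.sum_eq_zero fun i hi => by rw [hall i hi, zero_mul]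
    rw [hR, hF, ← h0, zero_mul]
  · have hex : ∃ i, 0 < f i := by
      by_contra h
      push_neg at h
      have : F ≤ 0 := Finset.sum_nonpos fun i _ => h i
      linarith
    obtain ⟨i0, hi0⟩ := hex
    have hgi0 : 0 < g i0 := by
      rcases (hg i0).lt_or_eq with h | h
      · exact h
      · exact absurd (hfg i0 h.symm) (ne_of_gt hi0)
    have hGpos : 0 < G :=
      Finset.sum_pos' (fun i _ => hg i) ⟨i0, Finset.mem_univ i0, hgi0⟩
    have key : ∀ i, f i - g i * (F / G) ≤
        f i * Real.log (f i / g i) - f i * Real.log (F / G) := by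
      intro i
      rcases (hf i).lt_or_eq with hfi | hfi
      · have hgi : 0 < g i := by
          rcases (hg i).lt_or_eq with h | h
          · exact h
          · exact absurd (hfg i h.symm) (ne_of_gt hfi)
        have hlog : Real.log ((g i * F) / (f i * G)) ≤ (g i * F) / (f i * G) - 1 :=
          Real.log_le_sub_one_of_pos (by positivity)
        have hsplit : Real.log ((g i * F) / (f i * G)) =
            Real.log (F / G) - Real.log (f i / g i) := by
          rw [Real.log_div (by positivity) (by positivity),
            Real.log_div (ne_of_gt hFpos) (ne_of_gt hGpos),
            Real.log_div (ne_of_gt hfi) (ne_of_gt hgi),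
            Real.log_mul (ne_of_gt hgi) (ne_of_gt hFpos),
            Real.log_mul (ne_of_gt hfi) (ne_of_gt hGpos)]
          ring
        have ht : f i * ((g i * F) / (f i * G)) = g i * (F / G) := by
          field_simp
        have h2 : f i * (Real.log (F / G) - Real.log (f i / g i)) ≤
            f i * ((g i * F) / (f i * G)) - f i * 1 := by
          rw [hsplit] at hlog
          have := mul_le_mul_of_nonneg_left hlog (hf i)
          linarith [mul_sub (f i) ((g i * F) / (f i * G)) 1, this]
        rw [ht] at h2
        nlinarith [h2]
      · rw [← hfi, zero_mul, zero_mul, sub_self, zero_sub, neg_nonpos]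
        exact mul_nonneg (hg i) (div_nonneg hFpos.le hGpos.le)
    have hsum := Finset.sum_le_sum fun i (_ : i ∈ univ) => key i
    have e1 : ∑ i, (f i - g i * (F / G)) = 0 := by
      rw [Finset.sum_sub_distrib, ← Finset.sum_mul, ← hF, ← hG]
      have : G * (F / G) = F := by field_simp
      rw [this, sub_self]
    have e2 : ∑ i, (f i * Real.log (f i / g i) - f i * Real.log (F / G)) =
        (∑ i, f i * Real.log (f i / g i)) - F * Real.log (F / G) := by
      rw [Finset.sum_sub_distrib, ← Finset.sum_mul, ← hF]
    rw [e1, e2] at hsum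
    linarith

/-- Data-processing inequality for relative entropy over a finite alphabet. -/
lemma klDPI {X Y : Type*} [Fintype X] [Fintype Y] (u v : X → ℝ) (K : X → Y → ℝ)
    (hu : ∀ x, 0 ≤ u x) (hv : ∀ x, 0 ≤ v x) (huv : ∀ x, v x = 0 → u x = 0)
    (hK0 : ∀ x y, 0 ≤ K x y) (hK1 : ∀ x, ∑ y, K x y = 1) :
    ∑ y, (∑ x, u x * K x y) * Real.log ((∑ x, u x * K x y) / (∑ x, v x * K x y)) ≤
      ∑ x, u x * Real.log (u x / v x) := by
  have step1 : ∀ y, (∑ x, u x * K x y) *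
      Real.log ((∑ x, u x * K x y) / (∑ x, v x * K x y)) ≤
      ∑ x, (u x * K x y) * Real.log ((u x * K x y) / (v x * K x y)) := by
    intro y
    refine logSumIneq _ _ (fun x => mul_nonneg (hu x) (hK0 x y))
      (fun x => mul_nonneg (hv x) (hK0 x y)) (fun x hx => ?_)
    rcases mul_eq_zero.1 hx with h | h
    · rw [huv x h, zero_mul]
    · rw [h, mul_zero]
  calc ∑ y, (∑ x, u x * K x y) * Real.log ((∑ x, u x * K x y) / (∑ x, v x * K x y))
      ≤ ∑ y, ∑ x, (u x * K x y) * Real.log ((u x * K x y) / (v x * K x y)) :=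
        Finset.sum_le_sum fun y _ => step1 y
    _ = ∑ x, ∑ y, (u x * K x y) * Real.log ((u x * K x y) / (v x * K x y)) :=
        Finset.sum_comm
    _ = ∑ x, u x * Real.log (u x / v x) := by
        refine Finset.sum_congr rfl fun x _ => ?_
        by_cases hux : u x = 0
        · simp [hux]
        · have hvx : v x ≠ 0 := fun h => hux (huv x h)
          have e : ∀ y, (u x * K x y) * Real.log ((u x * K x y) / (v x * K x y)) =
              (u x * Real.log (u x / v x)) * K x y := by
            intro y
            by_cases hK : K x y = 0
            · simp [hK]
            · rw [mul_div_mul_right _ _ hK]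
              ring
          rw [Finset.sum_congr rfl fun y _ => e y, ← Finset.mul_sum, hK1, mul_one]

lemma mutualInfo_comm {A B : Type*} [Fintype A] [Fintype B] (r : A → B → ℝ) :
    mutualInfo (fun b a => r a b) = mutualInfo r := by
  rw [mutualInfo, mutualInfo, Finset.sum_comm]
  exact Finset.sum_congr rfl fun a _ => Finset.sum_congr rfl fun b _ => by
    rw [mul_comm (∑ a', r a' b)]

/-- Data-processing inequality for mutual information: passing the second
coordinate through a channel `W` cannot increase mutual information. -/
lemma mutualInfo_dpi {A B C : Type*} [Fintype A] [Fintype B] [Fintype C]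
    (μ : A → B → ℝ) (W : B → C → ℝ)
    (hμ : ∀ a b, 0 ≤ μ a b) (hW0 : ∀ b c, 0 ≤ W b c) (hW1 : ∀ b, ∑ c, W b c = 1) :
    mutualInfo (fun a c => ∑ b, μ a b * W b c) ≤ mutualInfo μ := by
  classical
  set rA : A → ℝ := fun a => ∑ b, μ a b with hrA
  set rB : B → ℝ := fun b => ∑ a, μ a b with hrB
  have hνA : ∀ a, (∑ c, ∑ b, μ a b * W b c) = rA a := by
    intro a
    rw [Finset.sum_comm]
    simp [← Finset.mul_sum, hW1, hrA]
  have hνB : ∀ c, (∑ a, ∑ b, μ a b * W b c) = ∑ b, rB b * W b c := by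
    intro c
    rw [Finset.sum_comm]
    simp [← Finset.sum_mul, hrB]
  set K : A × B → A × C → ℝ := fun x y => if y.1 = x.1 then W x.2 y.2 else 0 with hK
  have hu_push : ∀ y : A × C,
      (∑ x : A × B, μ x.1 x.2 * K x y) = ∑ b, μ y.1 b * W b y.2 := by
    intro y
    rw [Fintype.sum_prod_type]
    simp [hK, mul_ite, Finset.sum_ite_eq]
  have hv_push : ∀ y : A × C,
      (∑ x : A × B, (rA x.1 * rB x.2) * K x y) = rA y.1 * ∑ b, rB b * W b y.2 := by
    intro y
    rw [Fintype.sum_prod_type]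
    simp [hK, mul_ite, Finset.sum_ite_eq, Finset.mul_sum, mul_assoc]
  have hkl := klDPI (X := A × B) (Y := A × C) (fun x => μ x.1 x.2)
    (fun x => rA x.1 * rB x.2) K
    (fun x => hμ x.1 x.2)
    (fun x => mul_nonneg (Finset.sum_nonneg fun b _ => hμ x.1 b)
      (Finset.sum_nonneg fun a _ => hμ a x.2))
    (fun x hx => by
      rcases mul_eq_zero.1 hx with h | h
      · have h1 : μ x.1 x.2 ≤ rA x.1 :=
          Finset.single_le_sum (fun b _ => hμ x.1 b) (Finset.mem_univ x.2)
        have := hμ x.1 x.2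
        rw [h] at h1
        linarith
      · have h1 : μ x.1 x.2 ≤ rB x.2 :=
          Finset.single_le_sum (fun a _ => hμ a x.2) (Finset.mem_univ x.1)
        have := hμ x.1 x.2
        rw [h] at h1
        linarith)
    (fun x y => by
      simp only [hK]
      split
      · exact hW0 x.2 y.2
      · exact le_refl 0)
    (fun x => by
      rw [Fintype.sum_prod_type]
      simp [hK, Finset.sum_ite_eq', hW1])
  have hL : mutualInfo (fun a c => ∑ b, μ a b * W b c) =
      ∑ y : A × C, (∑ x : A × B, μ x.1 x.2 * K x y) *
        Real.log ((∑ x : A × B, μ x.1 x.2 * K x y) /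
          (∑ x : A × B, (rA x.1 * rB x.2) * K x y)) := by
    rw [mutualInfo, Fintype.sum_prod_type]
    refine Finset.sum_congr rfl fun a _ => Finset.sum_congr rfl fun c _ => ?_
    rw [hu_push (a, c), hv_push (a, c), hνA, hνB]
  have hR : mutualInfo μ =
      ∑ x : A × B, μ x.1 x.2 * Real.log (μ x.1 x.2 / (rA x.1 * rB x.2)) := by
    rw [mutualInfo, Fintype.sum_prod_type]
  rw [hL, hR]
  exact hkl

/-- Data processing inequality: if the joint pmf `s` on `A × B × C`
factorizes as a Markov chain `X → Y → Z`, i.e.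
`s(a,b,c) = p(a) k(b|a) m(c|b)` with `p` a pmf and `k`, `m` stochastic
kernels, then `I(X;Z) ≤ I(X;Y)`, `I(X;Z) ≤ I(Y;Z)`, hence
`I(X;Z) ≤ min{I(X;Y), I(Y;Z)}`. -/
theorem dataProcessingInequality
    {A B C : Type*} [Fintype A] [Fintype B] [Fintype C]
    (s : A → B → C → ℝ) (p : A → ℝ) (k : A → B → ℝ) (m : B → C → ℝ)
    (hp0 : ∀ a, 0 ≤ p a) (hp1 : ∑ a, p a = 1)
    (hk0 : ∀ a b, 0 ≤ k a b) (hk1 : ∀ a, ∑ b, k a b = 1)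
    (hm0 : ∀ b c, 0 ≤ m b c) (hm1 : ∀ b, ∑ c, m b c = 1)
    (hs : ∀ a b c, s a b c = p a * k a b * m b c) :
    mutualInfo (fun a c => ∑ b, s a b c) ≤
        mutualInfo (fun a b => ∑ c, s a b c) ∧
      mutualInfo (fun a c => ∑ b, s a b c) ≤
        mutualInfo (fun b c => ∑ a, s a b c) ∧
      mutualInfo (fun a c => ∑ b, s a b c) ≤
        min (mutualInfo fun a b => ∑ c, s a b c)
          (mutualInfo fun b c => ∑ a, s a b c) := by
  classical
  have hs0 : ∀ a b c, 0 ≤ s a b c := fun a b c => by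
    rw [hs]
    exact mul_nonneg (mul_nonneg (hp0 a) (hk0 a b)) (hm0 b c)
  -- first inequality
  have h1 : mutualInfo (fun a c => ∑ b, s a b c) ≤
      mutualInfo (fun a b => ∑ c, s a b c) := by
    have heq : (fun a c => ∑ b, s a b c) =
        fun a c => ∑ b, (∑ c', s a b c') * m b c := by
      funext a c
      refine Finset.sum_congr rfl fun b _ => ?_
      simp only [hs, ← Finset.sum_mul, ← Finset.mul_sum, hm1, mul_one]
    rw [heq]
    exact mutualInfo_dpi (fun a b => ∑ c, s a b c) m
      (fun a b => Finset.sum_nonneg fun c _ => hs0 a b c) hm0 hm1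
  -- second inequality: reverse channel
  have h2 : mutualInfo (fun a c => ∑ b, s a b c) ≤
      mutualInfo (fun b c => ∑ a, s a b c) := by
    set q : B → ℝ := fun b => ∑ a, p a * k a b with hq
    set kr : B → A → ℝ := fun b a => if q b = 0 then p a else p a * k a b / q b with hkr
    have hq0 : ∀ b, 0 ≤ q b :=
      fun b => Finset.sum_nonneg fun a _ => mul_nonneg (hp0 a) (hk0 a b)
    have hkr0 : ∀ b a, 0 ≤ kr b a := by
      intro b a
      simp only [hkr]
      split
      · exact hp0 a
      · exact div_nonneg (mul_nonneg (hp0 a) (hk0 a b)) (hq0 b)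
    have hkr1 : ∀ b, ∑ a, kr b a = 1 := by
      intro b
      by_cases hqb : q b = 0
      · simp [hkr, hqb, hp1]
      · simp only [hkr, hqb, if_false]
        rw [← Finset.sum_div]
        have he : (∑ a, p a * k a b) = q b := rfl
        rw [he, div_self hqb]
    have heq : (fun c a => ∑ b, s a b c) =
        fun c a => ∑ b, (∑ a', s a' b c) * kr b a := by
      funext c a
      refine Finset.sum_congr rfl fun b _ => ?_
      have hsum : (∑ a', s a' b c) = q b * m b c := by
        simp only [hs, hq, ← Finset.sum_mul]
      rw [hsum]
      by_cases hqb : q b = 0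
      · have hz : ∀ a' ∈ univ, p a' * k a' b = 0 :=
          (Finset.sum_eq_zero_iff_of_nonneg fun a' _ =>
            mul_nonneg (hp0 a') (hk0 a' b)).1 hqb
        rw [hs, hz a (Finset.mem_univ a), hqb]
        ring
      · simp only [hkr, hqb, if_false]
        rw [hs]
        field_simp
    have hmain := mutualInfo_dpi (fun c b => ∑ a, s a b c) kr
      (fun c b => Finset.sum_nonneg fun a _ => hs0 a b c) hkr0 hkr1
    rw [mutualInfo_comm (fun b c => ∑ a, s a b c)] at hmain
    have : mutualInfo (fun c a => ∑ b, (fun c b => ∑ a, s a b c) c b * kr b a) =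
        mutualInfo (fun a c => ∑ b, s a b c) := by
      rw [show (fun c a => ∑ b, (fun c b => ∑ a, s a b c) c b * kr b a) =
        (fun c a => ∑ b, s a b c) from (heq).symm]
      exact mutualInfo_comm (fun a c => ∑ b, s a b c)
    rw [this] at hmain
    exact hmain
  exact ⟨h1, h2, le_min h1 h2⟩
end
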